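/- arXiv:1207.1698 — 2 statements merged into one kernel-verified Lean document; each statement's English description precedes it below -/
import Mathlib

section
/- Let I ⊂ ℝ be an open interval, a, b ∈ I with a < b, f : I → ℝ a twice differentiable mapping such that f'' is integrable on [a,b], and suppose |f''| belongs to the Godunova-Levin class Q(I). Then |(1/(b−a))·∫ₐᵇ f(x) dx − f((a+b)/2)| ≤ ((b−a)²/4) · ln(4/e) · (|f''(a)| + |f''(b)|). -/
open MeasureTheory Set Real

/-!
Integrating Taylor's formula with integral remainder over `[a, m]` and `[m, b]`, `m = (a + b) / 2`,
the first-order terms cancel and the error becomes `(J₁ - J₂) / (2 (b - a))` with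
`J₁ = ∫ₐᵐ (x - a)² f''` and `J₂ = ∫ᵦᵐ (x - b)² f''`. The Godunova–Levin inequality with
`λ = (b - x) / (b - a)` gives `|f'' x| ≤ (b - a) (|f'' a| / (b - x) + |f'' b| / (x - a))`, and
`∫ₐᵐ (x - a)² / (b - x) = (b - a)² (log 2 - 5/8)`, `∫ₐᵐ (x - a) = (b - a)² / 8` then yield the
constant `2 log 2 - 1 = log (4 / e)`. The reflection `x ↦ a + b - x` turns `J₂` into an integral
of the same shape as `J₁`.
-/

/-- A nonnegative function `g` belongs to the Godunova–Levin class `Q(I)` if for all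
`x, y ∈ I` and `l ∈ (0,1)` one has `g (l*x + (1-l)*y) ≤ g x / l + g y / (1-l)`. -/
def GodunovaLevin (I : Set ℝ) (g : ℝ → ℝ) : Prop :=
  (∀ x ∈ I, 0 ≤ g x) ∧
    ∀ x ∈ I, ∀ y ∈ I, ∀ l : ℝ, 0 < l → l < 1 →
      g (l * x + (1 - l) * y) ≤ g x / l + g y / (1 - l)

theorem integral_eq_mul_sub_mul_deriv_add_integral_sq_mul {f f' f'' : ℝ → ℝ} {u v : ℝ}
    (hf : ∀ x ∈ uIcc u v, HasDerivAt f (f' x) x) (hf' : ∀ x ∈ uIcc u v, HasDerivAt f' (f'' x) x)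
    (hf'' : IntervalIntegrable f'' volume u v) :
    ∫ x in u..v, f x = (v - u) * f v - (v - u) ^ 2 / 2 * f' v
      + (∫ x in u..v, (x - u) ^ 2 * f'' x) / 2 := by
  have hsub (x : ℝ) : HasDerivAt (fun x => x - u) 1 x := (hasDerivAt_id x).sub_const u
  have hsq (x : ℝ) : HasDerivAt (fun x => (x - u) ^ 2) (2 * (x - u)) x := by
    simpa using (hsub x).fun_pow 2
  have hf'_int : IntervalIntegrable f' volume u v :=
    ContinuousOn.intervalIntegrable fun x hx => (hf' x hx).continuousAt.continuousWithinAt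
  have parts₁ := intervalIntegral.integral_mul_deriv_eq_deriv_mul (fun x _ => hsub x) hf
    intervalIntegrable_const hf'_int
  have parts₂ := intervalIntegral.integral_mul_deriv_eq_deriv_mul (fun x _ => hsq x) hf'
    (ContinuousOn.intervalIntegrable (by fun_prop)) hf''
  simp only [one_mul, sub_self, mul_assoc] at parts₁ parts₂
  rw [intervalIntegral.integral_const_mul] at parts₂
  rw [parts₂]
  linear_combination parts₁

theorem integral_sub_mul_midpoint_eq {f f' f'' : ℝ → ℝ} {a b : ℝ}
    (hf : ∀ x ∈ uIcc a b, HasDerivAt f (f' x) x) (hf' : ∀ x ∈ uIcc a b, HasDerivAt f' (f'' x) x)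
    (hf'' : IntervalIntegrable f'' volume a b) :
    (∫ x in a..b, f x) - (b - a) * f ((a + b) / 2) =
      ((∫ x in a..(a + b) / 2, (x - a) ^ 2 * f'' x)
        - ∫ x in b..(a + b) / 2, (x - b) ^ 2 * f'' x) / 2 := by
  have hm : (a + b) / 2 ∈ uIcc a b := by
    rcases le_total a b with h | h
    · exact mem_uIcc.2 (Or.inl ⟨by linarith, by linarith⟩)
    · exact mem_uIcc.2 (Or.inr ⟨by linarith, by linarith⟩)
  have hsa : uIcc a ((a + b) / 2) ⊆ uIcc a b := uIcc_subset_uIcc left_mem_uIcc hm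
  have hsb : uIcc b ((a + b) / 2) ⊆ uIcc a b := uIcc_subset_uIcc right_mem_uIcc hm
  have hfc : ContinuousOn f (uIcc a b) :=
    fun x hx => (hf x hx).continuousAt.continuousWithinAt
  rw [← intervalIntegral.integral_add_adjacent_intervals ((hfc.mono hsa).intervalIntegrable)
      (hfc.mono hsb).intervalIntegrable.symm,
    intervalIntegral.integral_symm (f := f) b ((a + b) / 2),
    integral_eq_mul_sub_mul_deriv_add_integral_sq_mul (fun x hx => hf x (hsa hx))
      (fun x hx => hf' x (hsa hx)) (hf''.mono_set hsa),
    integral_eq_mul_sub_mul_deriv_add_integral_sq_mul (fun x hx => hf x (hsb hx))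
      (fun x hx => hf' x (hsb hx)) (hf''.mono_set hsb)]
  ring

theorem GodunovaLevin.le_of_mem_Ioo {I : Set ℝ} {g : ℝ → ℝ} (hg : GodunovaLevin I g)
    {a b x : ℝ} (ha : a ∈ I) (hb : b ∈ I) (hx : x ∈ Ioo a b) :
    g x ≤ (b - a) * (g a / (b - x) + g b / (x - a)) := by
  obtain ⟨hax, hxb⟩ := hx
  have hba : 0 < b - a := by linarith
  have hineq := hg.2 a ha b hb ((b - x) / (b - a)) (div_pos (by linarith) hba)
    ((div_lt_one hba).2 (by linarith))
  have hx : (b - x) / (b - a) * a + (1 - (b - x) / (b - a)) * b = x := by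
    field_simp; ring
  have hcompl : 1 - (b - x) / (b - a) = (x - a) / (b - a) := by field_simp; ring
  rw [hx, hcompl, div_div_eq_mul_div, div_div_eq_mul_div] at hineq
  exact hineq.trans_eq (by ring)

theorem integral_sq_sub_div_sub_left_half {a b : ℝ} (hab : a < b) :
    ∫ x in a..(a + b) / 2, (x - a) ^ 2 / (b - x) = (b - a) ^ 2 * (log 2 - 5 / 8) := by
  have hne : ∀ x ∈ uIcc a ((a + b) / 2), b - x ≠ 0 := by
    intro x hx
    rw [uIcc_of_le (by linarith)] at hx
    linarith [hx.2]
  have hderiv : ∀ x ∈ uIcc a ((a + b) / 2),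
      HasDerivAt (fun x => -(b - x) ^ 2 / 2 - 2 * (b - a) * x - (b - a) ^ 2 * log (b - x))
        ((x - a) ^ 2 / (b - x)) x := by
    intro x hx
    have hbx : HasDerivAt (fun x => b - x) (-1) x := by simpa using (hasDerivAt_id x).const_sub b
    refine ((((hbx.fun_pow 2).fun_neg.div_const 2).fun_sub
      ((hasDerivAt_id' x).const_mul (2 * (b - a)))).fun_sub
      ((hbx.log (hne x hx)).const_mul ((b - a) ^ 2))).congr_deriv ?_
    field_simp [hne x hx]
    ring
  rw [intervalIntegral.integral_eq_sub_of_hasDerivAt hderiv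
    (ContinuousOn.intervalIntegrable (by fun_prop (disch := assumption))),
    show b - (a + b) / 2 = (b - a) / 2 by ring, log_div (by linarith) two_ne_zero]
  ring

theorem abs_integral_left_half_sq_mul_le {a b A B : ℝ} {h : ℝ → ℝ} (hab : a < b)
    (hh : ∀ x ∈ Ioo a b, |h x| ≤ (b - a) * (A / (b - x) + B / (x - a))) :
    |∫ x in a..(a + b) / 2, (x - a) ^ 2 * h x| ≤ (b - a) ^ 3 * (A * (log 2 - 5 / 8) + B / 8) := by
  have hm : a ≤ (a + b) / 2 := by linarith
  have hne : ∀ x ∈ uIcc a ((a + b) / 2), b - x ≠ 0 := by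
    intro x hx
    rw [uIcc_of_le hm] at hx
    linarith [hx.2]
  have hpoint : ∀ x ∈ Ioc a ((a + b) / 2),
      ‖(x - a) ^ 2 * h x‖ ≤ (b - a) * (A * ((x - a) ^ 2 / (b - x)) + B * (x - a)) := by
    rintro x ⟨hax, hxm⟩
    have hxa : x - a ≠ 0 := by linarith
    calc ‖(x - a) ^ 2 * h x‖ = (x - a) ^ 2 * |h x| := by
          rw [Real.norm_eq_abs, abs_mul, abs_of_nonneg (sq_nonneg _)]
      _ ≤ (x - a) ^ 2 * ((b - a) * (A / (b - x) + B / (x - a))) :=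
          mul_le_mul_of_nonneg_left (hh x ⟨hax, by linarith⟩) (sq_nonneg _)
      _ = (b - a) * (A * ((x - a) ^ 2 / (b - x)) + B * (x - a)) := by
          field_simp
  have hint₁ : IntervalIntegrable (fun x => (x - a) ^ 2 / (b - x)) volume a ((a + b) / 2) :=
    ContinuousOn.intervalIntegrable (by fun_prop (disch := assumption))
  have hint₂ : IntervalIntegrable (fun x => x - a) volume a ((a + b) / 2) :=
    ContinuousOn.intervalIntegrable (by fun_prop)
  calc |∫ x in a..(a + b) / 2, (x - a) ^ 2 * h x|
      ≤ ∫ x in a..(a + b) / 2, (b - a) * (A * ((x - a) ^ 2 / (b - x)) + B * (x - a)) :=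
        intervalIntegral.norm_integral_le_of_norm_le hm (ae_of_all _ hpoint)
          (((hint₁.const_mul A).add (hint₂.const_mul B)).const_mul (b - a))
    _ = (b - a) ^ 3 * (A * (log 2 - 5 / 8) + B / 8) := by
        rw [intervalIntegral.integral_const_mul, intervalIntegral.integral_add
          (hint₁.const_mul A) (hint₂.const_mul B), intervalIntegral.integral_const_mul,
          intervalIntegral.integral_const_mul, integral_sq_sub_div_sub_left_half hab,
          intervalIntegral.integral_comp_sub_right (fun x => x), integral_id]
        ring

theorem abs_integral_right_half_sq_mul_le {a b A B : ℝ} {h : ℝ → ℝ} (hab : a < b)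
    (hh : ∀ x ∈ Ioo a b, |h x| ≤ (b - a) * (A / (b - x) + B / (x - a))) :
    |∫ x in b..(a + b) / 2, (x - b) ^ 2 * h x| ≤ (b - a) ^ 3 * (B * (log 2 - 5 / 8) + A / 8) := by
  have hreflect : ∫ x in b..(a + b) / 2, (x - b) ^ 2 * h x
      = -∫ x in a..(a + b) / 2, (x - a) ^ 2 * h (a + b - x) := by
    have hsq (x : ℝ) : (x - a) ^ 2 = (a + b - x - b) ^ 2 := by ring
    simp only [hsq, intervalIntegral.integral_comp_sub_left (fun y => (y - b) ^ 2 * h y),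
      show a + b - (a + b) / 2 = (a + b) / 2 by ring, add_sub_cancel_left]
    exact intervalIntegral.integral_symm _ _
  rw [hreflect, abs_neg]
  refine abs_integral_left_half_sq_mul_le hab fun x ⟨hax, hxb⟩ => ?_
  have := hh (a + b - x) ⟨by linarith, by linarith⟩
  rw [show b - (a + b - x) = x - a by ring, show a + b - x - a = b - x by ring] at this
  linarith

theorem godunova_levin_midpoint_ineq_general
    (I : Set ℝ) (hI' : I.OrdConnected)
    (a b : ℝ) (ha : a ∈ I) (hb : b ∈ I) (hab : a < b)
    (f f' f'' : ℝ → ℝ)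
    (hf' : ∀ x ∈ I, HasDerivAt f (f' x) x)
    (hf'' : ∀ x ∈ I, HasDerivAt f' (f'' x) x)
    (hint : IntervalIntegrable f'' volume a b)
    (hQ : GodunovaLevin I (fun x => |f'' x|)) :
    |(1 / (b - a)) * (∫ x in a..b, f x) - f ((a + b) / 2)|
      ≤ ((b - a) ^ 2 / 4) * Real.log (4 / Real.exp 1) * (|f'' a| + |f'' b|) := by
  have hIab := hI'.uIcc_subset ha hb
  have hmid := integral_sub_mul_midpoint_eq (fun x hx => hf' x (hIab hx))
    (fun x hx => hf'' x (hIab hx)) hint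
  have hGL (x : ℝ) (hx : x ∈ Ioo a b) :
      |f'' x| ≤ (b - a) * (|f'' a| / (b - x) + |f'' b| / (x - a)) :=
    hQ.le_of_mem_Ioo ha hb hx
  have hlog : log (4 / exp 1) = 2 * log 2 - 1 := by
    rw [log_div (by norm_num) (exp_ne_zero 1), log_exp, show (4 : ℝ) = 2 ^ 2 by norm_num, log_pow]
    push_cast
    ring
  have hba : 0 < b - a := sub_pos.2 hab
  set J₁ := ∫ x in a..(a + b) / 2, (x - a) ^ 2 * f'' x
  set J₂ := ∫ x in b..(a + b) / 2, (x - b) ^ 2 * f'' x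
  calc |(1 / (b - a)) * (∫ x in a..b, f x) - f ((a + b) / 2)|
      = |((∫ x in a..b, f x) - (b - a) * f ((a + b) / 2)) / (b - a)| := by
        congr 1
        field_simp
    _ = |J₁ - J₂| / (2 * (b - a)) := by
        rw [hmid, abs_div, abs_div, abs_two, abs_of_pos hba, div_div]
    _ ≤ (|J₁| + |J₂|) / (2 * (b - a)) := by gcongr; exact abs_sub _ _
    _ ≤ ((b - a) ^ 3 * (|f'' a| * (log 2 - 5 / 8) + |f'' b| / 8)
          + (b - a) ^ 3 * (|f'' b| * (log 2 - 5 / 8) + |f'' a| / 8)) / (2 * (b - a)) := by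
        gcongr
        · exact abs_integral_left_half_sq_mul_le hab hGL
        · exact abs_integral_right_half_sq_mul_le hab hGL
    _ = ((b - a) ^ 2 / 4) * log (4 / exp 1) * (|f'' a| + |f'' b|) := by
        rw [hlog]
        field_simp
        ring

theorem godunova_levin_midpoint_ineq
    (I : Set ℝ) (hI : IsOpen I) (hI' : I.OrdConnected)
    (a b : ℝ) (ha : a ∈ I) (hb : b ∈ I) (hab : a < b)
    (f f' f'' : ℝ → ℝ)
    (hf' : ∀ x ∈ I, HasDerivAt f (f' x) x)
    (hf'' : ∀ x ∈ I, HasDerivAt f' (f'' x) x)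
    (hint : IntervalIntegrable f'' volume a b)
    (hQ : GodunovaLevin I (fun x => |f'' x|)) :
    |(1 / (b - a)) * (∫ x in a..b, f x) - f ((a + b) / 2)|
      ≤ ((b - a) ^ 2 / 4) * Real.log (4 / Real.exp 1) * (|f'' a| + |f'' b|) :=
  godunova_levin_midpoint_ineq_general I hI' a b ha hb hab f f' f'' hf' hf'' hint hQ
end

section
/- Let I ⊂ ℝ be an open interval, a, b ∈ I with a < b, f : I → ℝ a twice differentiable mapping such that f'' is integrable on [a,b], let q ≥ 1, and suppose |f''|^q belongs to the Godunova-Levin class Q(I). Then |(1/(b−a))·∫ₐᵇ f(x) dx − (f(a)+f(b))/2| ≤ ((b−a)²/2) · (1/12)^(1 − 1/q) · { ( (3/8)·|f''(a)|^q + (1/8)·|f''(b)|^q )^(1/q) + ( (1/8)·|f''(a)|^q + (3/8)·|f''(b)|^q )^(1/q) }. -/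
open MeasureTheory Set Real

/-! Integrating by parts twice, the trapezoid error is a weighted integral of the second
derivative: `(b - a) (f a + f b) - 2 ∫ f = ∫ (x - a) (b - x) f''(x) dx`. Writing
`x = l a + (1 - l) b` with `l = (b - x) / (b - a)`, the Godunova–Levin inequality for `|f''|^q`
becomes `(x - a) (b - x) |f''(x)|^q ≤ (b - a) ((x - a) |f''(a)|^q + (b - x) |f''(b)|^q)`, a bound
linear in `x` once multiplied by the weight. On each half of `[a, b]` the weighted Hölder
inequality `∫ w g ≤ (∫ w)^(1 - 1/q) (∫ w g^q)^(1/q)` with `w = (x - a)(b - x)` then reduces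
everything to integrals of polynomials: the weight has mass `(b - a)^3 / 12` on each half. -/

theorem memLp_ofReal_of_integrable_rpow {α : Type*} [MeasurableSpace α] {μ : Measure α}
    {f : α → ℝ} {p : ℝ} (hp : 0 < p) (hf : 0 ≤ᵐ[μ] f)
    (hf_meas : AEStronglyMeasurable f μ)
    (hf_int : Integrable (fun x => f x ^ p) μ) : MemLp f (ENNReal.ofReal p) μ := by
  rw [← integrable_norm_rpow_iff hf_meas (by simpa using hp) ENNReal.ofReal_ne_top,
    ENNReal.toReal_ofReal hp.le]
  refine hf_int.congr ?_
  filter_upwards [hf] with x hx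
  rw [Real.norm_of_nonneg hx]

theorem integral_mul_le_weight_mul_Lp_of_nonneg {α : Type*} [MeasurableSpace α] {μ : Measure α}
    {w g : α → ℝ} {q : ℝ} (hq : 1 ≤ q) (hw : 0 ≤ᵐ[μ] w) (hg : 0 ≤ᵐ[μ] g)
    (hw_int : Integrable w μ) (hg_meas : AEStronglyMeasurable g μ)
    (hwg_int : Integrable (fun x => w x * g x ^ q) μ) :
    ∫ x, w x * g x ∂μ
      ≤ (∫ x, w x ∂μ) ^ (1 - 1 / q) * (∫ x, w x * g x ^ q ∂μ) ^ (1 / q) := by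
  obtain rfl | hq := hq.eq_or_lt
  · simp
  set p := q.conjExponent
  have hpq : p.HolderConjugate q := (Real.HolderConjugate.conjExponent hq).symm
  have hsum : 1 / p + 1 / q = 1 := hpq.one_div_add_one_div.trans (div_one 1)
  set F := fun x => w x ^ (1 / p)
  set G := fun x => w x ^ (1 / q) * g x
  have hF : 0 ≤ᵐ[μ] F := by filter_upwards [hw] with x hx using rpow_nonneg hx _
  have hG : 0 ≤ᵐ[μ] G := by
    filter_upwards [hw, hg] with x hwx hgx using mul_nonneg (rpow_nonneg hwx _) hgx
  have hFG : (fun x => w x * g x) =ᵐ[μ] fun x => F x * G x := by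
    filter_upwards [hw] with x hx
    rw [← mul_assoc, ← rpow_add' hx (hsum.symm ▸ one_ne_zero), hsum, rpow_one]
  have hFp : (fun x => F x ^ p) =ᵐ[μ] w := by
    filter_upwards [hw] with x hx
    rw [← rpow_mul hx, one_div_mul_cancel hpq.ne_zero, rpow_one]
  have hGq : (fun x => G x ^ q) =ᵐ[μ] fun x => w x * g x ^ q := by
    filter_upwards [hw, hg] with x hwx hgx
    rw [mul_rpow (rpow_nonneg hwx _) hgx, ← rpow_mul hwx, one_div_mul_cancel hpq.symm.ne_zero,
      rpow_one]
  have hF_meas : AEStronglyMeasurable F μ :=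
    (hw_int.aemeasurable.pow_const _).aestronglyMeasurable
  have hG_meas : AEStronglyMeasurable G μ :=
    ((hw_int.aemeasurable.pow_const _).mul hg_meas.aemeasurable).aestronglyMeasurable
  calc ∫ x, w x * g x ∂μ = ∫ x, F x * G x ∂μ := integral_congr_ae hFG
    _ ≤ (∫ x, F x ^ p ∂μ) ^ (1 / p) * (∫ x, G x ^ q ∂μ) ^ (1 / q) :=
        integral_mul_le_Lp_mul_Lq_of_nonneg hpq hF hG
          (memLp_ofReal_of_integrable_rpow hpq.pos hF hF_meas (hw_int.congr hFp.symm))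
          (memLp_ofReal_of_integrable_rpow hpq.symm.pos hG hG_meas (hwg_int.congr hGq.symm))
    _ = (∫ x, w x ∂μ) ^ (1 - 1 / q) * (∫ x, w x * g x ^ q ∂μ) ^ (1 / q) := by
        rw [integral_congr_ae hFp, integral_congr_ae hGq, eq_sub_of_add_eq hsum]

theorem integral_mul_le_weight_mul_Lp_of_mul_rpow_le {w g D : ℝ → ℝ} {c d q : ℝ}
    (hcd : c ≤ d) (hq : 1 ≤ q) (hw_int : IntervalIntegrable w volume c d)
    (hg_meas : AEStronglyMeasurable g (volume.restrict (Ioc c d)))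
    (hD_int : IntervalIntegrable D volume c d)
    (hw : ∀ x ∈ Ioc c d, 0 ≤ w x) (hg : ∀ x ∈ Ioc c d, 0 ≤ g x)
    (hwgD : ∀ x ∈ Ioc c d, w x * g x ^ q ≤ D x) :
    ∫ x in c..d, w x * g x
      ≤ (∫ x in c..d, w x) ^ (1 - 1 / q) * (∫ x in c..d, D x) ^ (1 / q) := by
  rw [intervalIntegrable_iff_integrableOn_Ioc_of_le hcd] at hw_int hD_int
  simp only [intervalIntegral.integral_of_le hcd]
  have hwg_int : IntegrableOn (fun x => w x * g x ^ q) (Ioc c d) := by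
    refine hD_int.mono' (hw_int.aestronglyMeasurable.mul
      (hg_meas.aemeasurable.pow_const q).aestronglyMeasurable) ?_
    refine (ae_restrict_iff' measurableSet_Ioc).2 (Filter.Eventually.of_forall fun x hx => ?_)
    rw [Real.norm_of_nonneg (mul_nonneg (hw x hx) (rpow_nonneg (hg x hx) q))]
    exact hwgD x hx
  calc ∫ x in Ioc c d, w x * g x
      ≤ (∫ x in Ioc c d, w x) ^ (1 - 1 / q) * (∫ x in Ioc c d, w x * g x ^ q) ^ (1 / q) :=
        integral_mul_le_weight_mul_Lp_of_nonneg hq (ae_restrict_of_forall_mem measurableSet_Ioc hw)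
          (ae_restrict_of_forall_mem measurableSet_Ioc hg) hw_int hg_meas hwg_int
    _ ≤ (∫ x in Ioc c d, w x) ^ (1 - 1 / q) * (∫ x in Ioc c d, D x) ^ (1 / q) := by
        refine mul_le_mul_of_nonneg_left (rpow_le_rpow ?_ ?_ (by positivity))
          (rpow_nonneg (setIntegral_nonneg measurableSet_Ioc hw) _)
        · exact setIntegral_nonneg measurableSet_Ioc fun x hx =>
            mul_nonneg (hw x hx) (rpow_nonneg (hg x hx) q)
        · exact setIntegral_mono_on hwg_int hD_int measurableSet_Ioc hwgD

theorem Real.mul_rpow_one_sub_mul_mul_rpow {t u v : ℝ} (s : ℝ) (ht : 0 ≤ t) (hu : 0 ≤ u)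
    (hv : 0 ≤ v) : (t * u) ^ (1 - s) * (t * v) ^ s = t * (u ^ (1 - s) * v ^ s) := by
  rw [mul_rpow ht hu, mul_rpow ht hv, mul_mul_mul_comm, ← rpow_add' ht (by simp), sub_add_cancel,
    rpow_one]

theorem integral_sub_mul_sub (a b c d : ℝ) :
    ∫ x in c..d, (x - a) * (b - x) =
      ((a + b) / 2 * d ^ 2 - d ^ 3 / 3 - a * b * d)
        - ((a + b) / 2 * c ^ 2 - c ^ 3 / 3 - a * b * c) := by
  refine intervalIntegral.integral_eq_sub_of_hasDerivAt
    (f := fun y => (a + b) / 2 * y ^ 2 - y ^ 3 / 3 - a * b * y) (fun x _ => ?_)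
    ((by fun_prop : Continuous fun x : ℝ => (x - a) * (b - x)).intervalIntegrable c d)
  refine ((((hasDerivAt_pow 2 x).const_mul ((a + b) / 2)).sub
    ((hasDerivAt_pow 3 x).div_const 3)).sub ((hasDerivAt_id x).const_mul (a * b))).congr_deriv ?_
  norm_num
  ring

theorem integral_mul_sub_add_mul_sub (a b c d A B : ℝ) :
    ∫ x in c..d, (A * (x - a) + B * (b - x)) =
      (A * (d - a) ^ 2 / 2 - B * (b - d) ^ 2 / 2)
        - (A * (c - a) ^ 2 / 2 - B * (b - c) ^ 2 / 2) := by
  refine intervalIntegral.integral_eq_sub_of_hasDerivAt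
    (f := fun y => A * (y - a) ^ 2 / 2 - B * (b - y) ^ 2 / 2) (fun x _ => ?_)
    ((by fun_prop : Continuous fun x : ℝ => A * (x - a) + B * (b - x)).intervalIntegrable c d)
  refine ((((((hasDerivAt_id x).sub_const a).pow 2).const_mul A).div_const 2).sub
    (((((hasDerivAt_id x).const_sub b).pow 2).const_mul B).div_const 2)).congr_deriv ?_
  norm_num
  ring

theorem integral_sub_mul_sub_mul_eq {f f' f'' : ℝ → ℝ} {a b : ℝ}
    (hf : ∀ x ∈ uIcc a b, HasDerivAt f (f' x) x)
    (hf' : ∀ x ∈ uIcc a b, HasDerivAt f' (f'' x) x)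
    (hf'' : IntervalIntegrable f'' volume a b) :
    ∫ x in a..b, (x - a) * (b - x) * f'' x = (b - a) * (f a + f b) - 2 * ∫ x in a..b, f x := by
  have hw : ∀ x ∈ uIcc a b, HasDerivAt (fun y => (y - a) * (b - y)) (a + b - 2 * x) x :=
    fun x _ => (((hasDerivAt_id x).sub_const a).mul ((hasDerivAt_id x).const_sub b)).congr_deriv
      (by simp only [id_eq]; ring)
  have hw' : ∀ x ∈ uIcc a b, HasDerivAt (fun y => a + b - 2 * y) (-2) x :=
    fun x _ => (((hasDerivAt_id x).const_mul 2).const_sub (a + b)).congr_deriv (by ring)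
  have hf'_cont : ContinuousOn f' (uIcc a b) :=
    fun x hx => (hf' x hx).continuousAt.continuousWithinAt
  calc ∫ x in a..b, (x - a) * (b - x) * f'' x = -∫ x in a..b, (a + b - 2 * x) * f' x := by
        rw [intervalIntegral.integral_mul_deriv_eq_deriv_mul hw hf'
          ((by fun_prop : Continuous fun x : ℝ => a + b - 2 * x).intervalIntegrable a b) hf'']
        ring
    _ = (b - a) * (f a + f b) - 2 * ∫ x in a..b, f x := by
        rw [intervalIntegral.integral_mul_deriv_eq_deriv_mul hw' hf intervalIntegrable_const
          hf'_cont.intervalIntegrable, intervalIntegral.integral_const_mul]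
        ring

theorem GodunovaLevin.sub_mul_sub_mul_le {I : Set ℝ} {g : ℝ → ℝ} (hg : GodunovaLevin I g)
    {a b x : ℝ} (ha : a ∈ I) (hb : b ∈ I) (hx : x ∈ Icc a b) :
    (x - a) * (b - x) * g x ≤ (b - a) * (g a * (x - a) + g b * (b - x)) := by
  obtain ⟨hax, hxb⟩ := hx
  have hga := hg.1 a ha
  have hgb := hg.1 b hb
  obtain rfl | hax := hax.eq_or_lt
  · simp only [sub_self, zero_mul, mul_zero, zero_add]
    exact mul_nonneg (by linarith) (mul_nonneg hgb (by linarith))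
  obtain rfl | hxb := hxb.eq_or_lt
  · simp only [sub_self, mul_zero, zero_mul, add_zero]
    exact mul_nonneg (by linarith) (mul_nonneg hga (by linarith))
  have hba : 0 < b - a := by linarith
  have hl' : 1 - (b - x) / (b - a) = (x - a) / (b - a) := by field_simp; ring
  have hx : (b - x) / (b - a) * a + (1 - (b - x) / (b - a)) * b = x := by
    rw [hl']; field_simp; ring
  have key := hg.2 a ha b hb ((b - x) / (b - a)) (div_pos (by linarith) hba)
    (by rw [div_lt_one hba]; linarith)
  rw [hx, hl'] at key
  calc (x - a) * (b - x) * g x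
      ≤ (x - a) * (b - x) * (g a / ((b - x) / (b - a)) + g b / ((x - a) / (b - a))) := by
        gcongr
    _ = (b - a) * (g a * (x - a) + g b * (b - x)) := by
        field_simp

theorem GodunovaLevin.integral_sub_mul_sub_mul_abs_le {I : Set ℝ} {h : ℝ → ℝ}
    {a b c d q : ℝ} (hQ : GodunovaLevin I fun x => |h x| ^ q) (ha : a ∈ I) (hb : b ∈ I)
    (hh : IntervalIntegrable h volume a b) (hq : 1 ≤ q)
    (hac : a ≤ c) (hcd : c ≤ d) (hdb : d ≤ b) :
    ∫ x in c..d, (x - a) * (b - x) * |h x|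
      ≤ (∫ x in c..d, (x - a) * (b - x)) ^ (1 - 1 / q) *
        ((b - a) * ∫ x in c..d, (|h a| ^ q * (x - a) + |h b| ^ q * (b - x))) ^ (1 / q) := by
  have hsub : Ioc c d ⊆ Icc a b := Ioc_subset_Icc_self.trans (Icc_subset_Icc hac hdb)
  rw [← intervalIntegral.integral_const_mul]
  exact integral_mul_le_weight_mul_Lp_of_mul_rpow_le hcd hq
    ((by fun_prop : Continuous fun x : ℝ => (x - a) * (b - x)).intervalIntegrable c d)
    (hh.abs.1.aestronglyMeasurable.mono_set (Ioc_subset_Ioc hac hdb))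
    ((by fun_prop : Continuous fun x : ℝ =>
      (b - a) * (|h a| ^ q * (x - a) + |h b| ^ q * (b - x))).intervalIntegrable c d)
    (fun x hx => mul_nonneg (sub_nonneg.2 (hsub hx).1) (sub_nonneg.2 (hsub hx).2))
    (fun x _ => abs_nonneg _) (fun x hx => hQ.sub_mul_sub_mul_le ha hb (hsub hx))

theorem GodunovaLevin.abs_integral_sub_mul_sub_mul_le {I : Set ℝ} {h : ℝ → ℝ} {a b q : ℝ}
    (hQ : GodunovaLevin I fun x => |h x| ^ q) (ha : a ∈ I) (hb : b ∈ I) (hab : a ≤ b)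
    (hh : IntervalIntegrable h volume a b) (hq : 1 ≤ q) :
    |∫ x in a..b, (x - a) * (b - x) * h x|
      ≤ (b - a) ^ 3 * (1 / 12 : ℝ) ^ (1 - 1 / q) *
        (((3 / 8) * |h a| ^ q + (1 / 8) * |h b| ^ q) ^ (1 / q)
          + ((1 / 8) * |h a| ^ q + (3 / 8) * |h b| ^ q) ^ (1 / q)) := by
  set m := (a + b) / 2
  set A := |h a| ^ q
  set B := |h b| ^ q
  have ham : a ≤ m := by simp only [m]; linarith
  have hmb : m ≤ b := by simp only [m]; linarith
  have hm : m ∈ uIcc a b := by rw [uIcc_of_le hab]; exact ⟨ham, hmb⟩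
  have hba : 0 ≤ (b - a) ^ 3 := pow_nonneg (sub_nonneg.2 hab) 3
  have h12 : (0 : ℝ) ≤ 1 / 12 := by norm_num
  have hw_left : ∫ x in a..m, (x - a) * (b - x) = (b - a) ^ 3 * (1 / 12) := by
    rw [integral_sub_mul_sub]; ring
  have hw_right : ∫ x in m..b, (x - a) * (b - x) = (b - a) ^ 3 * (1 / 12) := by
    rw [integral_sub_mul_sub]; ring
  have hD_left : (b - a) * ∫ x in a..m, (A * (x - a) + B * (b - x))
      = (b - a) ^ 3 * (1 / 8 * A + 3 / 8 * B) := by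
    rw [integral_mul_sub_add_mul_sub]; ring
  have hD_right : (b - a) * ∫ x in m..b, (A * (x - a) + B * (b - x))
      = (b - a) ^ 3 * (3 / 8 * A + 1 / 8 * B) := by
    rw [integral_mul_sub_add_mul_sub]; ring
  have hleft := hQ.integral_sub_mul_sub_mul_abs_le ha hb hh hq le_rfl ham hmb
  rw [hw_left, hD_left, mul_rpow_one_sub_mul_mul_rpow _ hba h12 (by positivity)] at hleft
  have hright := hQ.integral_sub_mul_sub_mul_abs_le ha hb hh hq ham hmb le_rfl
  rw [hw_right, hD_right, mul_rpow_one_sub_mul_mul_rpow _ hba h12 (by positivity)] at hright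
  have hwh_int : IntervalIntegrable (fun x => (x - a) * (b - x) * |h x|) volume a b :=
    hh.abs.continuousOn_mul (by fun_prop)
  calc |∫ x in a..b, (x - a) * (b - x) * h x|
      ≤ ∫ x in a..b, (x - a) * (b - x) * |h x| := by
        refine (intervalIntegral.abs_integral_le_integral_abs hab).trans_eq
          (intervalIntegral.integral_congr fun x hx => ?_)
        rw [uIcc_of_le hab] at hx
        rw [abs_mul, abs_of_nonneg (mul_nonneg (sub_nonneg.2 hx.1) (sub_nonneg.2 hx.2))]
    _ = (∫ x in a..m, (x - a) * (b - x) * |h x|) + ∫ x in m..b, (x - a) * (b - x) * |h x| :=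
        (intervalIntegral.integral_add_adjacent_intervals
          (hwh_int.mono_set (uIcc_subset_uIcc_left hm))
          (hwh_int.mono_set (uIcc_subset_uIcc_right hm))).symm
    _ ≤ _ := (add_le_add hleft hright).trans_eq (by ring)

theorem godunova_levin_trapezoid_power_ineq_general
    (I : Set ℝ) (hI' : I.OrdConnected)
    (a b : ℝ) (ha : a ∈ I) (hb : b ∈ I) (hab : a < b)
    (f f' f'' : ℝ → ℝ)
    (hf' : ∀ x ∈ I, HasDerivAt f (f' x) x)
    (hf'' : ∀ x ∈ I, HasDerivAt f' (f'' x) x)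
    (hint : IntervalIntegrable f'' volume a b)
    (q : ℝ) (hq : 1 ≤ q)
    (hQ : GodunovaLevin I (fun x => |f'' x| ^ q)) :
    |(1 / (b - a)) * (∫ x in a..b, f x) - (f a + f b) / 2|
      ≤ ((b - a) ^ 2 / 2) * ((1 / 12 : ℝ)) ^ (1 - 1 / q) *
        (((3 / 8) * |f'' a| ^ q + (1 / 8) * |f'' b| ^ q) ^ (1 / q)
          + ((1 / 8) * |f'' a| ^ q + (3 / 8) * |f'' b| ^ q) ^ (1 / q)) := by
  have hsub : uIcc a b ⊆ I := hI'.uIcc_subset ha hb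
  have hba : 0 < b - a := sub_pos.2 hab
  have hident := integral_sub_mul_sub_mul_eq (fun x hx => hf' x (hsub hx))
    (fun x hx => hf'' x (hsub hx)) hint
  have hbound := hQ.abs_integral_sub_mul_sub_mul_le ha hb hab.le hint hq
  rw [hident] at hbound
  calc |(1 / (b - a)) * (∫ x in a..b, f x) - (f a + f b) / 2|
      = |(b - a) * (f a + f b) - 2 * ∫ x in a..b, f x| / (2 * (b - a)) := by
        rw [← abs_of_pos (by positivity : 0 < 2 * (b - a)), ← abs_div, ← abs_neg]
        congr 1
        field_simp
        ring
    _ ≤ _ := div_le_div_of_nonneg_right hbound (by positivity)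
    _ = _ := by field_simp

theorem godunova_levin_trapezoid_power_ineq
    (I : Set ℝ) (hI : IsOpen I) (hI' : I.OrdConnected)
    (a b : ℝ) (ha : a ∈ I) (hb : b ∈ I) (hab : a < b)
    (f f' f'' : ℝ → ℝ)
    (hf' : ∀ x ∈ I, HasDerivAt f (f' x) x)
    (hf'' : ∀ x ∈ I, HasDerivAt f' (f'' x) x)
    (hint : IntervalIntegrable f'' volume a b)
    (q : ℝ) (hq : 1 ≤ q)
    (hQ : GodunovaLevin I (fun x => |f'' x| ^ q)) :
    |(1 / (b - a)) * (∫ x in a..b, f x) - (f a + f b) / 2|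
      ≤ ((b - a) ^ 2 / 2) * ((1 / 12 : ℝ)) ^ (1 - 1 / q) *
        (((3 / 8) * |f'' a| ^ q + (1 / 8) * |f'' b| ^ q) ^ (1 / q)
          + ((1 / 8) * |f'' a| ^ q + (3 / 8) * |f'' b| ^ q) ^ (1 / q)) :=
  godunova_levin_trapezoid_power_ineq_general I hI' a b ha hb hab f f' f'' hf' hf'' hint q hq hQ
end
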